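/- Let p be a polynomial in the Smith–Kidger Type 1 space that vanishes at the four vertices (1,±1,±1) of the face x₁=1 and at the face-centroid (1,0,0). Then p(1,x₂,x₃) = b·x₃(x₂²−1) + c·(x₂²−x₃²) for some real constants b and c. -/
import Mathlib


open MvPolynomial

noncomputable def SK1 : Submodule ℝ (MvPolynomial (Fin 3) ℝ) :=
  MvPolynomial.restrictTotalDegree (Fin 3) ℝ 2 ⊔
    Submodule.span ℝ {X 0 * X 1 * X 2, X 0 ^ 2 * X 1, X 1 ^ 2 * X 2, X 2 ^ 2 * X 0}

noncomputable def goodSub : Submodule ℝ (MvPolynomial (Fin 3) ℝ) where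
  carrier := {p | ∃ a b c d e f g : ℝ, ∀ y z : ℝ,
    eval ![1, y, z] p = a + b*y + c*z + d*y^2 + e*z^2 + f*(y*z) + g*(y^2*z)}
  zero_mem' := ⟨0,0,0,0,0,0,0, fun y z => by simp⟩
  add_mem' := by
    rintro p q ⟨a,b,c,d,e,f,g,hp⟩ ⟨a',b',c',d',e',f',g',hq⟩
    exact ⟨a+a',b+b',c+c',d+d',e+e',f+f',g+g', fun y z => by
      simp only [map_add, hp y z, hq y z]; ring⟩
  smul_mem' := by
    rintro r p ⟨a,b,c,d,e,f,g,hp⟩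
    exact ⟨r*a,r*b,r*c,r*d,r*e,r*f,r*g, fun y z => by
      simp only [smul_eval, hp y z]; ring⟩

lemma sk1_le_good : SK1 ≤ goodSub := by
  apply sup_le
  · intro p hp
    rw [MvPolynomial.mem_restrictTotalDegree] at hp
    rw [p.as_sum]
    apply Submodule.sum_mem
    intro m hm
    have hdeg : m 0 + m 1 + m 2 ≤ 2 := by
      have := MvPolynomial.le_totalDegree hm
      have h2 : (m.sum fun _ e => e) = m 0 + m 1 + m 2 := by
        rw [Finsupp.sum_fintype _ _ (fun _ => rfl), Fin.sum_univ_three]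
      omega
    have heval : ∀ y z : ℝ, eval ![1, y, z] (monomial m (coeff m p)) =
        coeff m p * (y ^ (m 1) * z ^ (m 2)) := by
      intro y z
      rw [eval_monomial, Finsupp.prod_fintype _ _ (fun _ => pow_zero _),
        Fin.prod_univ_three]
      simp [Matrix.cons_val_zero, Matrix.cons_val_one]
    obtain ⟨j, k, hjk, heval⟩ : ∃ j k : ℕ, j + k ≤ 2 ∧ ∀ y z : ℝ,
        eval ![1, y, z] (monomial m (coeff m p)) = coeff m p * (y ^ j * z ^ k) :=
      ⟨m 1, m 2, by omega, heval⟩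
    clear hdeg
    have hj : j ≤ 2 := by omega
    have hk : k ≤ 2 := by omega
    interval_cases j <;> interval_cases k
    · exact ⟨coeff m p,0,0,0,0,0,0, fun y z => by rw [heval]; ring⟩
    · exact ⟨0,0,coeff m p,0,0,0,0, fun y z => by rw [heval]; ring⟩
    · exact ⟨0,0,0,0,coeff m p,0,0, fun y z => by rw [heval]; ring⟩
    · exact ⟨0,coeff m p,0,0,0,0,0, fun y z => by rw [heval]; ring⟩
    · exact ⟨0,0,0,0,0,coeff m p,0, fun y z => by rw [heval]; ring⟩
    · omega
    · exact ⟨0,0,0,coeff m p,0,0,0, fun y z => by rw [heval]; ring⟩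
    · omega
    · omega
  · rw [Submodule.span_le]
    rintro q hq
    simp only [Set.mem_insert_iff, Set.mem_singleton_iff] at hq
    rcases hq with rfl | rfl | rfl | rfl
    · exact ⟨0,0,0,0,0,1,0, fun y z => by simp⟩
    · exact ⟨0,1,0,0,0,0,0, fun y z => by simp⟩
    · exact ⟨0,0,0,0,0,0,1, fun y z => by simp⟩
    · exact ⟨0,0,0,0,1,0,0, fun y z => by simp⟩

theorem stmt3 (p : MvPolynomial (Fin 3) ℝ) (hp : p ∈ SK1)
    (h1 : eval ![1, 1, 1] p = 0) (h2 : eval ![1, 1, -1] p = 0)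
    (h3 : eval ![1, -1, 1] p = 0) (h4 : eval ![1, -1, -1] p = 0)
    (h5 : eval ![1, 0, 0] p = 0) :
    ∃ b c : ℝ, ∀ y z : ℝ,
      eval ![1, y, z] p = b * z * (y ^ 2 - 1) + c * (y ^ 2 - z ^ 2) := by
  obtain ⟨a,b,c,d,e,f,g,hF⟩ := sk1_le_good hp
  rw [hF 1 1] at h1
  rw [hF 1 (-1)] at h2
  rw [hF (-1) 1] at h3
  rw [hF (-1) (-1)] at h4
  rw [hF 0 0] at h5
  refine ⟨g, d, fun y z => ?_⟩
  rw [hF y z]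
  have ha : a = 0 := by linarith
  have hb : b = 0 := by linarith
  have hf : f = 0 := by linarith
  have hc : c = -g := by linarith
  have he : e = -d := by linarith
  rw [ha, hb, hf, hc, he]; ring
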